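/- Let L be an N×N real symmetric positive definite matrix and let W = Σ_{(k,l)} w_{kl}·(e_k − e_l)·(e_k − e_l)ᵀ with all w_{kl} ≥ 0 and at least one w_{kl} > 0. Fix indices i, j, m, n and set a_{ij} = e_i − e_j, a_{mn} = e_m − e_n. Suppose that for every pair (k, l) with w_{kl} > 0: (i) ([L^{-1}]_{ik} − [L^{-1}]_{il}) − ([L^{-1}]_{jk} − [L^{-1}]_{jl}) > 0, (ii) ([L^{-1}]_{mk} − [L^{-1}]_{ml}) − ([L^{-1}]_{nk} − [L^{-1}]_{nl}) > 0, and also (iii) ([L^{-1}]_{im} − [L^{-1}]_{in}) − ([L^{-1}]_{jm} − [L^{-1}]_{jn}) > 0. Then (a_{mn}ᵀ·L^{-1}·W·L^{-1}·a_{ij})·(a_{mn}ᵀ·L^{-1}·a_{ij}) > 0; consequently the mixed second partial derivative of the function (s, t) ↦ trace(W·(L + s·a_{ij}·a_{ij}ᵀ + t·a_{mn}·a_{mn}ᵀ)^{-1}) at (0, 0) is strictly positive, while each of its first partial derivatives at (0, 0) is nonpositive. -/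

import Mathlib

/-!
Differentiating `(L + s P + t Q)⁻¹` twice, the mixed partial of `trace (W (L + s P + t Q)⁻¹)` at
the origin is `tr (W L⁻¹ P L⁻¹ Q L⁻¹) + tr (W L⁻¹ Q L⁻¹ P L⁻¹)`. For `P = a aᵀ`, `Q = b bᵀ` and
symmetric `L⁻¹`, `W` both traces collapse to `(bᵀ L⁻¹ W L⁻¹ a) (bᵀ L⁻¹ a)`. The second factor is
sign condition (iii); expanding `W` over its edges turns the first into
`∑ w_kl (bᵀ L⁻¹ a_kl) (a_klᵀ L⁻¹ a)`, whose terms are positive by (i) and (ii). The first partials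
are `-(L⁻¹ a)ᵀ W (L⁻¹ a) ≤ 0` since `W` is positive semidefinite.
-/

open Matrix Topology

section RingInverse

variable {𝕜 R : Type*} [NontriviallyNormedField 𝕜] [NormedRing R] [HasSummableGeomSeries R]
  [NormedAlgebra 𝕜 R]

theorem HasDerivAt.ringInverse {f : 𝕜 → R} {f' : R} {x : 𝕜} (hf : HasDerivAt f f' x)
    (hx : IsUnit (f x)) :
    HasDerivAt (fun t => Ring.inverse (f t))
      (-(Ring.inverse (f x) * f' * Ring.inverse (f x))) x := by
  obtain ⟨u, hu⟩ := hx
  simpa [← hu] using (hu ▸ hasFDerivAt_ringInverse (𝕜 := 𝕜) u).comp_hasDerivAt x hf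

end RingInverse

namespace Matrix

variable {n : Type*} [Fintype n]

section LinftyOpNorm

variable {𝕜 : Type*} [DecidableEq n] [RCLike 𝕜]

-- Any norm would do: it only gives access to normed-algebra calculus, and the statements
-- below involve just the product topology on matrices.
attribute [local instance] Matrix.linftyOpNormedRing Matrix.linftyOpNormedAlgebra

theorem _root_.HasDerivAt.matrix_inv {f : 𝕜 → Matrix n n 𝕜} {f' : Matrix n n 𝕜} {x : 𝕜}
    (hf : HasDerivAt f f' x) (hx : IsUnit (f x)) :
    HasDerivAt (fun t => (f t)⁻¹) (-((f x)⁻¹ * f' * (f x)⁻¹)) x := by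
  simp only [nonsing_inv_eq_ringInverse]
  exact hf.ringInverse hx

theorem _root_.HasDerivAt.matrix_trace_mul_left {f : 𝕜 → Matrix n n 𝕜} {f' : Matrix n n 𝕜}
    {x : 𝕜} (W : Matrix n n 𝕜) (hf : HasDerivAt f f' x) :
    HasDerivAt (fun t => (W * f t).trace) (W * f').trace x :=
  ((traceLinearMap n 𝕜 𝕜).comp (LinearMap.mulLeft 𝕜 W)).toContinuousLinearMap.hasFDerivAt
    |>.comp_hasDerivAt x hf

theorem hasDerivAt_inv_add_smul (A Q : Matrix n n 𝕜) (hA : IsUnit A) :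
    HasDerivAt (fun t : 𝕜 => (A + t • Q)⁻¹) (-(A⁻¹ * Q * A⁻¹)) 0 := by
  have hline : HasDerivAt (fun t : 𝕜 => A + t • Q) Q 0 := by
    have := ((hasDerivAt_id' (0 : 𝕜)).smul_const Q).const_add A
    rwa [one_smul] at this
  simpa using hline.matrix_inv (by simpa using hA)

theorem hasDerivAt_trace_mul_inv_add_smul (W A Q : Matrix n n 𝕜) (hA : IsUnit A) :
    HasDerivAt (fun t : 𝕜 => (W * (A + t • Q)⁻¹).trace) (-(W * (A⁻¹ * Q * A⁻¹)).trace) 0 := by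
  simpa using (hasDerivAt_inv_add_smul A Q hA).matrix_trace_mul_left W

theorem deriv_deriv_trace_mul_inv_add_smul_add_smul (W A P Q : Matrix n n 𝕜) (hA : IsUnit A) :
    deriv (fun s : 𝕜 => deriv (fun t : 𝕜 => (W * (A + s • P + t • Q)⁻¹).trace) 0) 0
      = (W * (A⁻¹ * P * A⁻¹ * Q * A⁻¹)).trace + (W * (A⁻¹ * Q * A⁻¹ * P * A⁻¹)).trace := by
  have hunit : ∀ᶠ s in 𝓝 (0 : 𝕜), IsUnit (A + s • P) := by
    have hcont : Continuous fun s : 𝕜 => A + s • P := by fun_prop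
    exact hcont.continuousAt.eventually_mem (Units.isOpen.mem_nhds (by simpa using hA))
  have hinner : (fun s : 𝕜 => deriv (fun t : 𝕜 => (W * (A + s • P + t • Q)⁻¹).trace) 0)
      =ᶠ[𝓝 0] fun s => -(W * ((A + s • P)⁻¹ * Q * (A + s • P)⁻¹)).trace :=
    hunit.mono fun s hs => (hasDerivAt_trace_mul_inv_add_smul W _ Q hs).deriv
  have hinv := hasDerivAt_inv_add_smul A P hA
  rw [hinner.deriv_eq]
  refine (((hinv.mul_const Q).mul hinv).matrix_trace_mul_left W).neg.deriv.trans ?_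
  simp only [zero_smul, add_zero, Matrix.mul_add, Matrix.neg_mul, Matrix.mul_neg, trace_add,
    trace_neg, Matrix.mul_assoc]
  ring

end LinftyOpNorm

namespace IsSymm

variable {R : Type*} [CommSemiring R] {A : Matrix n n R}

theorem vecMul_eq_mulVec (hA : A.IsSymm) (x : n → R) : x ᵥ* A = A *ᵥ x := by
  conv_lhs => rw [← hA.eq]
  exact vecMul_transpose A x

theorem dotProduct_mulVec_comm (hA : A.IsSymm) (x y : n → R) :
    x ⬝ᵥ (A *ᵥ y) = y ⬝ᵥ (A *ᵥ x) := by
  rw [dotProduct_mulVec, hA.vecMul_eq_mulVec, dotProduct_comm]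

end IsSymm

section RankOne

variable {R : Type*} [CommSemiring R]

theorem vecMulVec_mul_mul_vecMulVec (u v w z : n → R) (C : Matrix n n R) :
    vecMulVec u v * C * vecMulVec w z = ((v ᵥ* C) ⬝ᵥ w) • vecMulVec u z := by
  rw [vecMulVec_mul, vecMulVec_mul_vecMulVec, vecMulVec_smul]

theorem trace_mul_mul_vecMulVec_mul (W B : Matrix n n R) (x y : n → R) :
    (W * (B * vecMulVec x y * B)).trace = (y ᵥ* B) ⬝ᵥ (W *ᵥ (B *ᵥ x)) := by
  rw [mul_vecMulVec, vecMulVec_mul, mul_vecMulVec, trace_vecMulVec, dotProduct_comm]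

theorem trace_mul_mul_vecMulVec_mul_vecMulVec_mul (W B : Matrix n n R) (x y : n → R) :
    (W * (B * vecMulVec x x * B * vecMulVec y y * B)).trace
      = ((x ᵥ* B) ⬝ᵥ y) * ((y ᵥ* B) ⬝ᵥ (W *ᵥ (B *ᵥ x))) := by
  rw [show B * vecMulVec x x * B * vecMulVec y y * B
      = B * (vecMulVec x x * B * vecMulVec y y) * B by simp only [Matrix.mul_assoc],
    vecMulVec_mul_mul_vecMulVec, Matrix.mul_smul, Matrix.smul_mul, Matrix.mul_smul, trace_smul,
    trace_mul_mul_vecMulVec_mul, smul_eq_mul]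

theorem trace_mul_vecMulVec_sandwich_add_swap {W B : Matrix n n R} (hW : W.IsSymm)
    (hB : B.IsSymm) (x y : n → R) :
    (W * (B * vecMulVec x x * B * vecMulVec y y * B)).trace
      + (W * (B * vecMulVec y y * B * vecMulVec x x * B)).trace
      = 2 * ((y ⬝ᵥ (B *ᵥ (W *ᵥ (B *ᵥ x)))) * (y ⬝ᵥ (B *ᵥ x))) := by
  simp only [trace_mul_mul_vecMulVec_mul_vecMulVec_mul, dotProduct_mulVec y,
    hB.vecMul_eq_mulVec]
  rw [dotProduct_comm (B *ᵥ x) y, hB.dotProduct_mulVec_comm y x, dotProduct_comm x,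
    hW.dotProduct_mulVec_comm (B *ᵥ x)]
  ring

theorem dotProduct_sum_smul_vecMulVec_mulVec {ι : Type*} (P : Finset ι) (w : ι → R)
    (b c : ι → n → R) (x y : n → R) :
    x ⬝ᵥ ((∑ p ∈ P, w p • vecMulVec (b p) (c p)) *ᵥ y)
      = ∑ p ∈ P, w p * ((x ⬝ᵥ b p) * (c p ⬝ᵥ y)) := by
  simp only [sum_mulVec, dotProduct_sum, smul_mulVec, vecMulVec_mulVec, op_smul_eq_smul,
    dotProduct_smul, smul_eq_mul]
  exact Finset.sum_congr rfl fun p _ => by ring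

end RankOne

theorem single_sub_single_dotProduct_mulVec {R : Type*} [CommRing R] [DecidableEq n]
    (A : Matrix n n R) (i j k l : n) :
    (Pi.single i 1 - Pi.single j 1 : n → R) ⬝ᵥ (A *ᵥ (Pi.single k 1 - Pi.single l 1))
      = (A i k - A i l) - (A j k - A j l) := by
  simp only [mulVec_sub, mulVec_single, MulOpposite.op_one, one_smul, dotProduct_sub,
    sub_dotProduct, single_dotProduct, col_apply, one_mul]
  abel

theorem posSemidef_sum_smul_vecMulVec_self {ι : Type*} (P : Finset ι) (w : ι → ℝ)
    (b : ι → n → ℝ) (hw : ∀ p ∈ P, 0 ≤ w p) :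
    (∑ p ∈ P, w p • vecMulVec (b p) (b p)).PosSemidef :=
  posSemidef_sum P fun p hp => by
    simpa using (posSemidef_vecMulVec_self_star (b p)).smul (hw p hp)

theorem deriv_trace_mul_inv_add_smul_vecMulVec_self_nonpos [DecidableEq n]
    {L W : Matrix n n ℝ} (hL : L.IsSymm) (hLu : IsUnit L) (hW : W.PosSemidef) (x : n → ℝ) :
    deriv (fun t : ℝ => (W * (L + t • vecMulVec x x)⁻¹).trace) 0 ≤ 0 := by
  rw [(hasDerivAt_trace_mul_inv_add_smul W L _ hLu).deriv, neg_nonpos,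
    trace_mul_mul_vecMulVec_mul, hL.inv.vecMul_eq_mulVec]
  simpa using hW.dotProduct_mulVec_nonneg (L⁻¹ *ᵥ x)

end Matrix

theorem Finset.sum_mul_pos_of_exists {ι R : Type*} [Semiring R] [PartialOrder R]
    [IsStrictOrderedRing R] {P : Finset ι} {w f : ι → R}
    (hw : ∀ p ∈ P, 0 ≤ w p) (hpos : ∃ p ∈ P, 0 < w p) (hf : ∀ p ∈ P, 0 < w p → 0 < f p) :
    0 < ∑ p ∈ P, w p * f p := by
  refine Finset.sum_pos' (fun p hp => ?_) (hpos.imp fun p ⟨hp, h⟩ => ⟨hp, mul_pos h (hf p hp h)⟩)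
  rcases (hw p hp).eq_or_lt with h | h
  · simp [← h]
  · exact (mul_pos h (hf p hp h)).le

/-- paper's Theorem 1: under the stated sign conditions on the
entries of `L⁻¹`, the stability objective is supermodular and decreasing in the
addition of the edges `(i,j)` and `(m,n)`: the product
`(a_{mn}ᵀ·L⁻¹·W·L⁻¹·a_{ij})·(a_{mn}ᵀ·L⁻¹·a_{ij})` is strictly positive, hence
the mixed second partial derivative at `(0,0)` of
`(s, t) ↦ trace(W·(L + s·a_{ij}·a_{ij}ᵀ + t·a_{mn}·a_{mn}ᵀ)⁻¹)` is strictly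
positive, while each first partial derivative at `(0,0)` is nonpositive. -/
theorem supermodularity_of_edge_addition (N : ℕ)
    (L : Matrix (Fin N) (Fin N) ℝ) (hL : L.PosDef)
    (P : Finset (Fin N × Fin N)) (w : Fin N × Fin N → ℝ)
    (hw_nonneg : ∀ p ∈ P, 0 ≤ w p) (hw_pos : ∃ p ∈ P, 0 < w p)
    (W : Matrix (Fin N) (Fin N) ℝ)
    (hW : W = ∑ p ∈ P, w p •
      Matrix.vecMulVec ((Pi.single p.1 1 : Fin N → ℝ) - Pi.single p.2 1)
        ((Pi.single p.1 1 : Fin N → ℝ) - Pi.single p.2 1))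
    (i j m n : Fin N)
    (aij amn : Fin N → ℝ)
    (haij : aij = (Pi.single i 1 : Fin N → ℝ) - Pi.single j 1)
    (hamn : amn = (Pi.single m 1 : Fin N → ℝ) - Pi.single n 1)
    (hcond1 : ∀ p ∈ P, 0 < w p →
      0 < (L⁻¹ i p.1 - L⁻¹ i p.2) - (L⁻¹ j p.1 - L⁻¹ j p.2))
    (hcond2 : ∀ p ∈ P, 0 < w p →
      0 < (L⁻¹ m p.1 - L⁻¹ m p.2) - (L⁻¹ n p.1 - L⁻¹ n p.2))
    (hcond3 : 0 < (L⁻¹ i m - L⁻¹ i n) - (L⁻¹ j m - L⁻¹ j n)) :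
    0 < (amn ⬝ᵥ (L⁻¹ *ᵥ (W *ᵥ (L⁻¹ *ᵥ aij)))) * (amn ⬝ᵥ (L⁻¹ *ᵥ aij)) ∧
    0 < deriv (fun s : ℝ => deriv (fun t : ℝ =>
        (W * (L + s • Matrix.vecMulVec aij aij
          + t • Matrix.vecMulVec amn amn)⁻¹).trace) 0) 0 ∧
    deriv (fun s : ℝ =>
        (W * (L + s • Matrix.vecMulVec aij aij
          + (0 : ℝ) • Matrix.vecMulVec amn amn)⁻¹).trace) 0 ≤ 0 ∧
    deriv (fun t : ℝ =>
        (W * (L + (0 : ℝ) • Matrix.vecMulVec aij aij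
          + t • Matrix.vecMulVec amn amn)⁻¹).trace) 0 ≤ 0 := by
  have hLsymm : L.IsSymm := isHermitian_iff_isSymm.mp hL.isHermitian
  have hLinv : L⁻¹.IsSymm := hLsymm.inv
  have hWpsd : W.PosSemidef := hW ▸ posSemidef_sum_smul_vecMulVec_self P w _ hw_nonneg
  have hcross : 0 < amn ⬝ᵥ (L⁻¹ *ᵥ aij) := by
    rwa [hLinv.dotProduct_mulVec_comm, haij, hamn, single_sub_single_dotProduct_mulVec]
  have hweighted : 0 < amn ⬝ᵥ (L⁻¹ *ᵥ (W *ᵥ (L⁻¹ *ᵥ aij))) := by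
    rw [dotProduct_mulVec, hLinv.vecMul_eq_mulVec, hW, dotProduct_sum_smul_vecMulVec_mulVec]
    refine Finset.sum_mul_pos_of_exists hw_nonneg hw_pos fun p hp hwp => mul_pos ?_ ?_
    · rw [dotProduct_comm, hLinv.dotProduct_mulVec_comm, hamn, single_sub_single_dotProduct_mulVec]
      exact hcond2 p hp hwp
    · rw [hLinv.dotProduct_mulVec_comm, haij, single_sub_single_dotProduct_mulVec]
      exact hcond1 p hp hwp
  refine ⟨mul_pos hweighted hcross, ?_, ?_, ?_⟩
  · rw [deriv_deriv_trace_mul_inv_add_smul_add_smul W L _ _ hL.isUnit,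
      trace_mul_vecMulVec_sandwich_add_swap (isHermitian_iff_isSymm.mp hWpsd.isHermitian) hLinv]
    exact mul_pos two_pos (mul_pos hweighted hcross)
  · simpa using deriv_trace_mul_inv_add_smul_vecMulVec_self_nonpos hLsymm hL.isUnit hWpsd aij
  · simpa using deriv_trace_mul_inv_add_smul_vecMulVec_self_nonpos hLsymm hL.isUnit hWpsd amn
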